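/- arXiv:1910.05146 — 3 statements merged into one kernel-verified Lean document; each statement's English description precedes it below -/
import Mathlib

section
/- Every primitive graph contains an induced path P₄ on four vertices. -/
variable {V : Type*} [Fintype V] [DecidableEq V]

/-- A set `X` of vertices is a module of `G` if every vertex outside `X` is
adjacent to all of `X` or to none of `X`. -/
def IsModule (G : SimpleGraph V) (X : Set V) : Prop :=
  ∀ y ∉ X, (∀ x ∈ X, G.Adj y x) ∨ (∀ x ∈ X, ¬ G.Adj y x)


/-- A graph on at least 3 vertices is primitive if all of its modules are
trivial. -/
def IsPrimitive (G : SimpleGraph V) : Prop :=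
  3 ≤ Fintype.card V ∧
    ∀ X : Set V, IsModule G X → X = ∅ ∨ (∃ v, X = {v}) ∨ X = Set.univ

/-- Auxiliary: `G` contains an induced `P₄`. -/
def HasP4 (G : SimpleGraph V) : Prop :=
  ∃ a b c d : V, a ≠ b ∧ a ≠ c ∧ a ≠ d ∧ b ≠ c ∧ b ≠ d ∧ c ≠ d ∧
    G.Adj a b ∧ G.Adj b c ∧ G.Adj c d ∧
    ¬ G.Adj a c ∧ ¬ G.Adj a d ∧ ¬ G.Adj b d

lemma hasP4_compl {G : SimpleGraph V} (h : HasP4 Gᶜ) : HasP4 G := by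
  obtain ⟨a, b, c, d, hab, hac, had, hbc, hbd, hcd, e1, e2, e3, n1, n2, n3⟩ := h
  have g1 : G.Adj a c := by
    by_contra h'; exact n1 ((SimpleGraph.compl_adj _ _ _).mpr ⟨hac, h'⟩)
  have g2 : G.Adj a d := by
    by_contra h'; exact n2 ((SimpleGraph.compl_adj _ _ _).mpr ⟨had, h'⟩)
  have g3 : G.Adj b d := by
    by_contra h'; exact n3 ((SimpleGraph.compl_adj _ _ _).mpr ⟨hbd, h'⟩)
  exact ⟨c, a, d, b, hac.symm, hcd, hbc.symm, had, hab, hbd.symm,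
    g1.symm, g2, g3.symm,
    fun h' => ((SimpleGraph.compl_adj _ _ _).mp e3).2 h',
    fun h' => ((SimpleGraph.compl_adj _ _ _).mp e2).2 h'.symm,
    fun h' => ((SimpleGraph.compl_adj _ _ _).mp e1).2 h'⟩

lemma isModule_compl {G : SimpleGraph V} {X : Set V} (h : IsModule Gᶜ X) :
    IsModule G X := by
  intro y hy
  rcases h y hy with hall | hnone
  · right; intro x hx; exact ((SimpleGraph.compl_adj _ _ _).mp (hall x hx)).2
  · left; intro x hx
    have hne : y ≠ x := fun e => hy (e ▸ hx)
    by_contra hadj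
    exact hnone x hx ((SimpleGraph.compl_adj _ _ _).mpr ⟨hne, hadj⟩)

lemma core_module (G : SimpleGraph V) (hP4 : ¬ HasP4 G) (v b₀ : V)
    (hb₀ne : b₀ ≠ v) (hb₀v : ¬ G.Adj v b₀)
    (hmax : ∀ b', b' ≠ v → ¬ G.Adj v b' →
      ({a | G.Adj v a ∧ G.Adj b' a}).ncard ≤ ({a | G.Adj v a ∧ G.Adj b₀ a}).ncard)
    (t : V) (htv : G.Adj v t) (htb : ¬ G.Adj b₀ t) :
    ∃ X : Set V, IsModule G X ∧ (∃ x ∈ X, ∃ y ∈ X, x ≠ y) ∧ X ≠ Set.univ := by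
  set T : Set V := {a | G.Adj v a ∧ ¬ G.Adj b₀ a} with hTdef
  -- R1: every vertex of T is adjacent to every common neighbor of v and b₀
  have hR1 : ∀ t' ∈ T, ∀ a, G.Adj v a → G.Adj b₀ a → G.Adj t' a := by
    rintro t' ⟨ht'v, ht'b⟩ a hav hab
    by_contra hna
    refine hP4 ⟨t', v, a, b₀, ht'v.ne.symm, ?_, ?_, hav.ne, Ne.symm hb₀ne,
      hab.ne.symm, ht'v.symm, hav, hab.symm, hna, fun h => ht'b h.symm, hb₀v⟩
    · rintro rfl; exact ht'b hab
    · rintro rfl; exact hb₀v ht'v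
  -- R2: no vertex of T has a neighbor among the non-neighbors of v
  have hR2 : ∀ t' ∈ T, ∀ b', b' ≠ v → ¬ G.Adj v b' → ¬ G.Adj b' t' := by
    rintro t' ⟨ht'v, ht'b⟩ b' hb'ne hb'v hadj
    have hbb' : ¬ G.Adj b' b₀ := by
      intro h
      refine hP4 ⟨v, t', b', b₀, ht'v.ne, Ne.symm hb'ne, Ne.symm hb₀ne, ?_, ?_,
        h.ne, ht'v, hadj.symm, h, hb'v, hb₀v, fun h' => ht'b h'.symm⟩
      · rintro rfl; exact hb'v ht'v
      · rintro rfl; exact hb₀v ht'v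
    have hall : ∀ a, G.Adj v a → G.Adj b₀ a → G.Adj b' a := by
      intro a hav hab
      by_contra hna
      refine hP4 ⟨b', t', a, b₀, hadj.ne, ?_, ?_, ?_, ?_, hab.ne.symm,
        hadj, hR1 t' ⟨ht'v, ht'b⟩ a hav hab, hab.symm, hna, hbb',
        fun h => ht'b h.symm⟩
      · rintro rfl; exact hb'v hav
      · rintro rfl; exact ht'b hadj
      · rintro rfl; exact ht'b hab
      · rintro rfl; exact hb₀v ht'v
    have hsub : {a | G.Adj v a ∧ G.Adj b₀ a} ⊂ {a | G.Adj v a ∧ G.Adj b' a} := by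
      constructor
      · rintro a ⟨hav, hab⟩; exact ⟨hav, hall a hav hab⟩
      · intro hc
        exact ht'b (hc ⟨ht'v, hadj⟩).2
    exact (not_lt.mpr (hmax b' hb'ne hb'v)) (Set.ncard_lt_ncard hsub (Set.toFinite _))
  -- T is a module
  have hTmod : IsModule G T := by
    intro y hy
    by_cases hyv : y = v
    · subst hyv; left; rintro x ⟨hxv, _⟩; exact hxv
    by_cases hyA : G.Adj v y
    · have hyb : G.Adj b₀ y := by
        by_contra h; exact hy ⟨hyA, h⟩
      left; rintro x hx; exact (hR1 x hx y hyA hyb).symm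
    · right; rintro x hx hadj; exact hR2 x hx y hyv hyA hadj
  have htT : t ∈ T := ⟨htv, htb⟩
  by_cases hT2 : ∃ t₂ ∈ T, t₂ ≠ t
  · obtain ⟨t₂, ht₂, hne⟩ := hT2
    refine ⟨T, hTmod, ⟨t₂, ht₂, t, htT, hne⟩, ?_⟩
    intro h
    have hvT : v ∈ T := h ▸ Set.mem_univ v
    exact G.loopless.irrefl v hvT.1
  · push_neg at hT2
    refine ⟨{v, t}, ?_, ⟨v, Or.inl rfl, t, Or.inr rfl, htv.ne⟩, ?_⟩
    · intro y hy
      have hyv : y ≠ v := fun h => hy (h ▸ Or.inl rfl)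
      have hyt : y ≠ t := fun h => hy (h ▸ Or.inr rfl)
      by_cases hyA : G.Adj v y
      · have hyb : G.Adj b₀ y := by
          by_contra h
          exact hyt (hT2 y ⟨hyA, h⟩)
        left
        rintro x (rfl | rfl)
        · exact hyA.symm
        · exact (hR1 _ htT y hyA hyb).symm
      · right
        rintro x (rfl | rfl) hadj
        · exact hyA hadj.symm
        · exact hR2 _ htT y hyv hyA hadj
    · intro h
      have hb : b₀ ∈ ({v, t} : Set V) := h ▸ Set.mem_univ b₀
      rcases hb with rfl | rfl
      · exact hb₀ne rfl
      · exact hb₀v htv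

/-- Every primitive graph contains an induced path `P₄` on four vertices. -/
theorem primitive_has_induced_P4 (G : SimpleGraph V) (hG : IsPrimitive G) :
    ∃ a b c d : V, a ≠ b ∧ a ≠ c ∧ a ≠ d ∧ b ≠ c ∧ b ≠ d ∧ c ≠ d ∧
      G.Adj a b ∧ G.Adj b c ∧ G.Adj c d ∧
      ¬ G.Adj a c ∧ ¬ G.Adj a d ∧ ¬ G.Adj b d := by
  classical
  by_contra hP4
  have hP4 : ¬ HasP4 G := hP4
  obtain ⟨hcard, hmod⟩ := hG
  -- the complement of a singleton is never a module of a primitive graph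
  have hcs : ∀ v : V, ¬ IsModule G {v}ᶜ := by
    intro v hM
    have h2 : 1 < Fintype.card V := by omega
    rcases hmod _ hM with h | ⟨u, h⟩ | h
    · obtain ⟨w, hw⟩ := Fintype.exists_ne_of_one_lt_card h2 v
      have : w ∈ ({v}ᶜ : Set V) := hw
      rw [h] at this
      exact this
    · have hsub : (Finset.univ : Finset V) ⊆ {v, u} := by
        intro x _
        by_cases hx : x = v
        · simp [hx]
        · have hxu : x ∈ ({v}ᶜ : Set V) := hx
          rw [h] at hxu
          have : x = u := hxu
          simp [this]
      have := Finset.card_le_card hsub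
      have hle : ({v, u} : Finset V).card ≤ 2 :=
        (Finset.card_insert_le _ _).trans (by simp)
      rw [Finset.card_univ] at this
      omega
    · have : v ∈ ({v}ᶜ : Set V) := h ▸ Set.mem_univ v
      exact this rfl
  have hnotuniv : ∀ v : V, ∃ u, u ≠ v ∧ ¬ G.Adj v u := by
    intro v
    by_contra h
    push_neg at h
    apply hcs v
    intro y hy
    have hyv : y = v := by simpa using hy
    subst hyv
    left
    intro x hx
    exact h x (by simpa using hx)
  have hnotisol : ∀ v : V, ∃ u, G.Adj v u := by
    intro v
    by_contra h
    push_neg at h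
    apply hcs v
    intro y hy
    have hyv : y = v := by simpa using hy
    subst hyv
    right
    intro x _
    exact h x
  have : Nonempty V := Fintype.card_pos_iff.mp (by omega)
  obtain ⟨v⟩ := this
  -- kill any nontrivial proper module
  have hkill : ∀ X : Set V, IsModule G X → (∃ x ∈ X, ∃ y ∈ X, x ≠ y) →
      X ≠ Set.univ → False := by
    rintro X hM ⟨x, hx, y, hy, hxy⟩ hne
    rcases hmod X hM with h | ⟨u, h⟩ | h
    · rw [h] at hx; exact hx
    · rw [h] at hx hy
      exact hxy (hx.trans hy.symm)
    · exact hne h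
  -- choose b₀ among non-neighbors of v maximizing common neighbors with v
  have hBne : (Finset.univ.filter (fun b => b ≠ v ∧ ¬ G.Adj v b)).Nonempty := by
    obtain ⟨u, h1, h2⟩ := hnotuniv v
    exact ⟨u, by simp [h1, h2]⟩
  obtain ⟨b₀, hb₀mem, hb₀max⟩ := Finset.exists_max_image _
    (fun b => ({a | G.Adj v a ∧ G.Adj b a}).ncard) hBne
  simp only [Finset.mem_filter, Finset.mem_univ, true_and] at hb₀mem
  by_cases hb₀A : ∃ t, G.Adj v t ∧ ¬ G.Adj b₀ t
  · obtain ⟨t, h1, h2⟩ := hb₀A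
    obtain ⟨X, hX1, hX2, hX3⟩ := core_module G hP4 v b₀ hb₀mem.1 hb₀mem.2
      (fun b' hb1 hb2 => hb₀max b' (by simp [hb1, hb2])) t h1 h2
    exact hkill X hX1 hX2 hX3
  push_neg at hb₀A
  -- dual argument in the complement
  have hP4' : ¬ HasP4 Gᶜ := fun h => hP4 (hasP4_compl h)
  have hAne : (Finset.univ.filter (fun a => G.Adj v a)).Nonempty := by
    obtain ⟨u, h⟩ := hnotisol v
    exact ⟨u, by simp [h]⟩
  obtain ⟨a₀, ha₀mem, ha₀max⟩ := Finset.exists_max_image _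
    (fun a => ({b | Gᶜ.Adj v b ∧ Gᶜ.Adj a b}).ncard) hAne
  simp only [Finset.mem_filter, Finset.mem_univ, true_and] at ha₀mem
  have ha₀ne : a₀ ≠ v := ha₀mem.ne.symm
  have ha₀v : ¬ Gᶜ.Adj v a₀ := fun h => ((SimpleGraph.compl_adj _ _ _).mp h).2 ha₀mem
  have hmax' : ∀ b', b' ≠ v → ¬ Gᶜ.Adj v b' →
      ({b | Gᶜ.Adj v b ∧ Gᶜ.Adj b' b}).ncard ≤
        ({b | Gᶜ.Adj v b ∧ Gᶜ.Adj a₀ b}).ncard := by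
    intro b' h1 h2
    have hadj : G.Adj v b' := by
      by_contra h
      exact h2 ((SimpleGraph.compl_adj _ _ _).mpr ⟨Ne.symm h1, h⟩)
    exact ha₀max b' (by simp [hadj])
  by_cases hdual : ∃ t, Gᶜ.Adj v t ∧ ¬ Gᶜ.Adj a₀ t
  · obtain ⟨t, h1, h2⟩ := hdual
    obtain ⟨X, hX1, hX2, hX3⟩ := core_module Gᶜ hP4' v a₀ ha₀ne ha₀v hmax' t h1 h2
    exact hkill X (isModule_compl hX1) hX2 hX3
  · push_neg at hdual
    have h1 : Gᶜ.Adj v b₀ := (SimpleGraph.compl_adj _ _ _).mpr ⟨Ne.symm hb₀mem.1, hb₀mem.2⟩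
    have h2 : Gᶜ.Adj a₀ b₀ := hdual b₀ h1
    have h3 : G.Adj b₀ a₀ := hb₀A a₀ ha₀mem
    exact ((SimpleGraph.compl_adj _ _ _).mp h2).2 h3.symm
end

section
/- Let C be a clan of a symmetric 2-structure with primitive coarsest quotient {C_i : i ∈ I}, and let x ∉ C. Then there exists at most one index i such that x is like C_i in C. -/
variable {V : Type*} [Fintype V] [DecidableEq V] {C : Type*}

/-- A set \`X\` is a clan of the symmetric 2-structure given by the edge
coloring \`e\` if every vertex outside \`X\` sees all of \`X\` with one color. -/
def IsClan (e : V → V → C) (X : Set V) : Prop :=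
  ∀ x ∉ X, ∀ y ∈ X, ∀ z ∈ X, e x y = e x z


/-- \`X\` is a clan of the 2-structure restricted to \`W\`. -/
def IsClanOn (e : V → V → C) (W X : Set V) : Prop :=
  X ⊆ W ∧ ∀ x ∈ W \ X, ∀ y ∈ X, ∀ z ∈ X, e x y = e x z

/-- \`x\` is like the subclan \`Sub\` in the clan \`Cl\`: \`x\` sees the rest of
\`Cl\` in the same way as every element of \`Sub\` does. -/
def IsLike (e : V → V → C) (Cl Sub : Set V) (x : V) : Prop :=
  ∀ y ∈ Sub, ∀ z ∈ Cl \ Sub, e x z = e y z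

/-- If the coarsest quotient of the clan `Cn` is primitive, then `x ∉ Cn` is
like at most one of the maximal strong subclans `Ci i`. -/
theorem like_at_most_one (e : V → V → C) (hsymm : ∀ a b, e a b = e b a)
    {I : Type*} (Cn : Set V) (Ci : I → Set V)
    (hCn : IsClan e Cn)
    (hclan : ∀ i, IsClanOn e Cn (Ci i))
    (hne : ∀ i, (Ci i).Nonempty)
    (hdisj : ∀ i j, i ≠ j → Disjoint (Ci i) (Ci j))
    (hcover : (⋃ i, Ci i) = Cn)
    (hprim : ∀ i j, i ≠ j → ∃ k, k ≠ i ∧ k ≠ j ∧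
      ∃ a ∈ Ci k, ∃ b ∈ Ci i, ∃ c ∈ Ci j, e a b ≠ e a c)
    (x : V) (hx : x ∉ Cn) :
    ∀ i j, IsLike e Cn (Ci i) x → IsLike e Cn (Ci j) x → i = j := by
  intro i j hi hj
  by_contra hij
  obtain ⟨k, hki, hkj, a, ha, b, hb, c, hc, hne'⟩ := hprim i j hij
  have haCn : a ∈ Cn := (hclan k).1 ha
  have hai : a ∉ Ci i := fun h => (hdisj k i hki).ne_of_mem ha h rfl
  have haj : a ∉ Ci j := fun h => (hdisj k j hkj).ne_of_mem ha h rfl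
  have h1 := hi b hb a ((Set.mem_diff a).mpr ⟨haCn, hai⟩)
  have h2 := hj c hc a ((Set.mem_diff a).mpr ⟨haCn, haj⟩)
  exact hne' (by rw [hsymm a b, ← h1, h2, hsymm])
end

section
/- Let C be a clan of a symmetric 2-structure whose coarsest quotient is primitive with maximal strong subclans {C_i : i ∈ I}, and let x ∉ C. If x is like C_i in C for some i, then C_i ∪ {x} is a clan of the 2-structure restricted to C ∪ {x}. -/
variable {V : Type*} [Fintype V] [DecidableEq V] {C : Type*}

/-- If the coarsest quotient of the clan `Cn` is primitive and `x ∉ Cn` is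
like the maximal strong subclan `Ci i`, then `Ci i ∪ {x}` is a clan of the
2-structure restricted to `Cn ∪ {x}`. -/
theorem like_union_is_clan (e : V → V → C) (hsymm : ∀ a b, e a b = e b a)
    {I : Type*} (Cn : Set V) (Ci : I → Set V)
    (hCn : IsClan e Cn)
    (hclan : ∀ i, IsClanOn e Cn (Ci i))
    (hne : ∀ i, (Ci i).Nonempty)
    (hdisj : ∀ i j, i ≠ j → Disjoint (Ci i) (Ci j))
    (hcover : (⋃ i, Ci i) = Cn)
    (hprim : ∀ i j, i ≠ j → ∃ k, k ≠ i ∧ k ≠ j ∧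
      ∃ a ∈ Ci k, ∃ b ∈ Ci i, ∃ c ∈ Ci j, e a b ≠ e a c)
    (x : V) (hx : x ∉ Cn) (i : I) (hlike : IsLike e Cn (Ci i) x) :
    IsClanOn e (Cn ∪ {x}) (Ci i ∪ {x}) := by
  obtain ⟨hsub, hcl⟩ := hclan i
  constructor
  · exact Set.union_subset_union hsub le_rfl
  · rintro w ⟨hw, hw'⟩ y hy z hz
    -- w is not x, so w ∈ Cn \ Ci i
    have hwx : w ≠ x := fun h => hw' (Or.inr h)
    have hwCn : w ∈ Cn := hw.resolve_right hwx
    have hwCi : w ∉ Ci i := fun h => hw' (Or.inl h)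
    have key : ∀ u ∈ Ci i, e w u = e w x := by
      intro u hu
      have := hlike u hu w ⟨hwCn, hwCi⟩
      rw [hsymm w u, hsymm w x, this]
    rcases hy with hy | hy <;> rcases hz with hz | hz
    · exact hcl w ⟨hwCn, hwCi⟩ y hy z hz
    · rw [hz, key y hy]
    · rw [hy, key z hz]
    · rw [hy, hz]
end
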